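/- Let m be a positive integer, M a real symmetric positive semidefinite m×m matrix, λ > 0, and δ ∈ ℝ^m. Then ‖δ‖² − λ ⟪(M + λ I_m)⁻¹ δ, δ⟫ > 0 if and only if M δ ≠ 0. -/

import Mathlib

open Matrix

/-- Strict-descent condition: for a symmetric positive semidefinite matrix `M` and `λ > 0`,
`‖δ‖² − λ ⟪(M + λI)⁻¹ δ, δ⟫ > 0` if and only if `M δ ≠ 0`. -/
theorem strict_descent_iff
    (m : ℕ) (hm : 0 < m)
    (M : Matrix (Fin m) (Fin m) ℝ) (hM : M.PosSemidef)
    (lam : ℝ) (hlam : 0 < lam)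
    (δ : Fin m → ℝ) :
    0 < δ ⬝ᵥ δ - lam * (((M + lam • (1 : Matrix (Fin m) (Fin m) ℝ))⁻¹ *ᵥ δ) ⬝ᵥ δ)
      ↔ M *ᵥ δ ≠ 0 := by
  set A : Matrix (Fin m) (Fin m) ℝ := M + lam • (1 : Matrix (Fin m) (Fin m) ℝ) with hAdef
  have hsm : (lam • (1 : Matrix (Fin m) (Fin m) ℝ)).PosDef := by
    rw [smul_one_eq_diagonal]
    exact Matrix.PosDef.diagonal fun _ => hlam
  have hA : A.PosDef := Matrix.PosDef.posSemidef_add hM hsm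
  have hAu : IsUnit A.det := hA.det_pos.ne'.isUnit
  set v : Fin m → ℝ := A⁻¹ *ᵥ δ with hvdef
  have hAv : A *ᵥ v = δ := by
    rw [hvdef, mulVec_mulVec, Matrix.mul_nonsing_inv A hAu, one_mulVec]
  have hδ : δ = M *ᵥ v + lam • v := by
    rw [← hAv, hAdef, add_mulVec, smul_mulVec, one_mulVec]
  have hMT : Mᵀ = M := hM.1
  have hsym : ∀ w : Fin m → ℝ, v ⬝ᵥ (M *ᵥ w) = (M *ᵥ v) ⬝ᵥ w := by
    intro w
    rw [dotProduct_mulVec, ← mulVec_transpose, hMT]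
  -- key identity
  have key : δ ⬝ᵥ δ - lam * (v ⬝ᵥ δ)
      = (M *ᵥ v) ⬝ᵥ (M *ᵥ v) + lam * (v ⬝ᵥ (M *ᵥ v)) := by
    rw [hδ]
    simp only [dotProduct_add, add_dotProduct, dotProduct_smul, smul_dotProduct,
      smul_eq_mul]
    rw [dotProduct_comm v (M *ᵥ v)]
    ring
  have hsq : ∀ w : Fin m → ℝ, 0 ≤ w ⬝ᵥ w := fun w => by
    simpa using dotProduct_self_star_nonneg w
  have hMδ : M *ᵥ δ = M *ᵥ (M *ᵥ v) + lam • (M *ᵥ v) := by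
    rw [hδ, mulVec_add, mulVec_smul]
  have hMv : M *ᵥ δ = 0 ↔ M *ᵥ v = 0 := by
    constructor
    · intro h0
      have h1 : v ⬝ᵥ (M *ᵥ δ) = 0 := by rw [h0, dotProduct_zero]
      rw [hMδ, dotProduct_add, dotProduct_smul, hsym, smul_eq_mul] at h1
      have h2 : 0 ≤ (M *ᵥ v) ⬝ᵥ (M *ᵥ v) := hsq _
      have h3 : 0 ≤ v ⬝ᵥ (M *ᵥ v) := by simpa using hM.dotProduct_mulVec_nonneg v
      have h4 : (M *ᵥ v) ⬝ᵥ (M *ᵥ v) = 0 := by nlinarith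
      exact (dotProduct_self_eq_zero).mp h4
    · intro h0
      rw [hMδ, h0, mulVec_zero, smul_zero, add_zero]
  rw [key]
  constructor
  · intro hpos h0
    have h1 : M *ᵥ v = 0 := hMv.mp h0
    rw [h1] at hpos
    simp at hpos
  · intro h0
    have h1 : M *ᵥ v ≠ 0 := fun h => h0 (hMv.mpr h)
    have h2 : 0 < (M *ᵥ v) ⬝ᵥ (M *ᵥ v) := by
      rcases lt_or_eq_of_le (hsq (M *ᵥ v)) with h | h
      · exact h
      · exact absurd ((dotProduct_self_eq_zero).mp h.symm) h1
    have h3 : 0 ≤ v ⬝ᵥ (M *ᵥ v) := by simpa using hM.dotProduct_mulVec_nonneg v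
    nlinarith
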